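/- arXiv:2403.06328 — 3 statements merged into one kernel-verified Lean document; each statement's English description precedes it below -/
import Mathlib

section
/- In a deterministic MDP with rewards r(s) ∈ [0,1] and discount γ ∈ [0,1), if a state-action pair (s,a) satisfies P_{π_β}[Q^{π_β}(s,a) < ∑_{t≥1} γ^{t-1} r(s_t) | s_1 = s] ≤ δ under the behavior policy π_β, and the return distribution is λ-Lipschitz near optimality in the sense Q*(s, a*) - Q*(s, a) ≤ λδ, then a policy π̂ that is (δ, π_β)-good at every state satisfies V*(s₀) - V^{π̂}(s₀) ≤ λδ/(1-γ) for every initial state s₀. -/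
open MeasureTheory

/-!
Along the trajectory of `π̂` the value gap `Vstar - Vpi` satisfies the performance-difference
identity `gap s = (Q*(s,a*) - Q*(s,π̂ s)) + γ · gap (T s (π̂ s))`. Goodness of `π̂` together with
the Lipschitz assumption bounds the advantage term by `λδ`, so `gap ≤ λδ + γ · gap ∘ next`.
Applied at the supremum of the (bounded) gap this gives `sup gap ≤ λδ + γ · sup gap`.
-/

theorem le_div_one_sub_of_le_add_mul_comp {X : Type*} {d : X → ℝ} {f : X → X} {c γ : ℝ}
    (hγ0 : 0 ≤ γ) (hγ1 : γ < 1) (hd : BddAbove (Set.range d))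
    (h : ∀ x, d x ≤ c + γ * d (f x)) (x : X) : d x ≤ c / (1 - γ) := by
  have : Nonempty X := ⟨x⟩
  have hsup : ⨆ y, d y ≤ c + γ * ⨆ y, d y :=
    ciSup_le fun y => (h y).trans (by gcongr; exact le_ciSup hd _)
  rw [le_div_iff₀ (sub_pos.2 hγ1)]
  nlinarith [le_ciSup hd x]

theorem value_sub_value_eq_advantage_add {S A : Type*} (γ : ℝ) (T : S → A → S) (r : S → ℝ)
    (Qstar : S → A → ℝ) (Vstar Vpi : S → ℝ) (astar pihat : S → A)
    (hVQ : ∀ s, Vstar s = Qstar s (astar s))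
    (hQ : ∀ s a, Qstar s a = r s + γ * Vstar (T s a))
    (hVpi : ∀ s, Vpi s = r s + γ * Vpi (T s (pihat s))) (s : S) :
    Vstar s - Vpi s = (Qstar s (astar s) - Qstar s (pihat s))
      + γ * (Vstar (T s (pihat s)) - Vpi (T s (pihat s))) := by
  rw [hVQ, hVpi, hQ s (pihat s)]
  ring

theorem good_policy_value_bound_general
    {S A : Type*} [MeasurableSpace S]
    (γ : ℝ) (hγ0 : 0 ≤ γ) (hγ1 : γ < 1)
    (δ lam : ℝ)
    (T : S → A → S) (r : S → ℝ)
    (μ : S → Measure (ℕ → S))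
    (Qbeta : S → A → ℝ)
    (Qstar : S → A → ℝ) (Vstar Vpi : S → ℝ) (astar pihat : S → A)
    (hVQ : ∀ s, Vstar s = Qstar s (astar s))
    (hQ : ∀ s a, Qstar s a = r s + γ * Vstar (T s a))
    (hVpi : ∀ s, Vpi s = r s + γ * Vpi (T s (pihat s)))
    (B : ℝ) (hB : ∀ s, |Vstar s| ≤ B ∧ |Vpi s| ≤ B)
    (hgood : ∀ s, μ s {traj : ℕ → S | Qbeta s (pihat s) < ∑' t : ℕ, γ ^ t * r (traj t)}
      ≤ ENNReal.ofReal δ)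
    (hLip : ∀ s a,
      μ s {traj : ℕ → S | Qbeta s a < ∑' t : ℕ, γ ^ t * r (traj t)} ≤ ENNReal.ofReal δ →
      Qstar s (astar s) - Qstar s a ≤ lam * δ) :
    ∀ s₀, Vstar s₀ - Vpi s₀ ≤ lam * δ / (1 - γ) := by
  have hbdd : BddAbove (Set.range fun s => Vstar s - Vpi s) := by
    refine ⟨2 * B, ?_⟩
    rintro _ ⟨s, rfl⟩
    linarith [le_abs_self (Vstar s), neg_abs_le (Vpi s), hB s]
  refine le_div_one_sub_of_le_add_mul_comp (f := fun s => T s (pihat s)) hγ0 hγ1 hbdd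
    fun s => ?_
  rw [value_sub_value_eq_advantage_add γ T r Qstar Vstar Vpi astar pihat hVQ hQ hVpi s]
  linarith [hLip s (pihat s) (hgood s)]

/-- If `π̂` is `(δ, π_β)`-good at every state (the behavior-policy probability that the
discounted return exceeds `Q^{π_β}(s, π̂(s))` is at most `δ`), and the MDP is
`λ`-Lipschitz near optimality (`Q*(s,a*) - Q*(s,a) ≤ λδ` whenever `(s,a)` is
`(δ, π_β)`-good), then `V*(s₀) - V^{π̂}(s₀) ≤ λδ/(1-γ)` for every initial state. -/
theorem good_policy_value_bound
    {S A : Type*} [MeasurableSpace S]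
    (γ : ℝ) (hγ0 : 0 ≤ γ) (hγ1 : γ < 1)
    (δ lam : ℝ) (hδ : 0 ≤ δ) (hlam : 0 ≤ lam)
    (T : S → A → S) (r : S → ℝ) (hr : ∀ s, r s ∈ Set.Icc (0 : ℝ) 1)
    (μ : S → Measure (ℕ → S)) (hμ : ∀ s, IsProbabilityMeasure (μ s))
    (Qbeta : S → A → ℝ)
    (Qstar : S → A → ℝ) (Vstar Vpi : S → ℝ) (astar pihat : S → A)
    (hVQ : ∀ s, Vstar s = Qstar s (astar s))
    (hopt : ∀ s a, Qstar s a ≤ Qstar s (astar s))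
    (hQ : ∀ s a, Qstar s a = r s + γ * Vstar (T s a))
    (hVpi : ∀ s, Vpi s = r s + γ * Vpi (T s (pihat s)))
    (B : ℝ) (hB : ∀ s, |Vstar s| ≤ B ∧ |Vpi s| ≤ B)
    (hgood : ∀ s, μ s {traj : ℕ → S | Qbeta s (pihat s) < ∑' t : ℕ, γ ^ t * r (traj t)}
      ≤ ENNReal.ofReal δ)
    (hLip : ∀ s a,
      μ s {traj : ℕ → S | Qbeta s a < ∑' t : ℕ, γ ^ t * r (traj t)} ≤ ENNReal.ofReal δ →
      Qstar s (astar s) - Qstar s a ≤ lam * δ) :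
    ∀ s₀, Vstar s₀ - Vpi s₀ ≤ lam * δ / (1 - γ) :=
  good_policy_value_bound_general γ hγ0 hγ1 δ lam T r μ Qbeta Qstar Vstar Vpi astar pihat hVQ hQ
    hVpi B hB hgood hLip
end

section
/- If the distributional Bellman operator on outcome distributions, defined by (T p)(·|s) = law of φ(s) + γ ψ' with ψ' ~ p(·|s') and s' ~ π_β(·|s), is applied to distributions supported in [0,1]ᵈ with φ(s) ∈ [0,1-γ]ᵈ, then T maps this set of distributions into itself and is a γ-contraction in the supremum (over states) Wasserstein-∞ distance. -/
open MeasureTheory ENNReal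

/-- The `∞`-Wasserstein distance between two measures: infimum over couplings of the
essential supremum of the distance between the coordinates. -/
noncomputable def Winf {E : Type*} [MeasurableSpace E] [EDist E] (μ ν : Measure E) : ℝ≥0∞ :=
  ⨅ c : {c : Measure (E × E) // c.map Prod.fst = μ ∧ c.map Prod.snd = ν},
    essSup (fun pr : E × E => edist pr.1 pr.2) (c : Measure (E × E))

/-- The unit cube `[0,1]^d`. -/
def unitCube (d : ℕ) : Set (Fin d → ℝ) := {f | ∀ i, f i ∈ Set.Icc (0 : ℝ) 1}

/-- The distributional Bellman operator on state-indexed outcome distributions: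
sample `s' ~ κ s`, sample `ψ' ~ p(·|s')`, output `φ(s) + γ ψ'`. -/
noncomputable def Tdist {S : Type*} [MeasurableSpace S] {d : ℕ}
    (γ : ℝ) (φ : S → Fin d → ℝ) (κ : S → Measure S)
    (p : S → Measure (Fin d → ℝ)) (s : S) : Measure (Fin d → ℝ) :=
  (κ s).bind fun s' => (p s').map fun ψ => φ s + γ • ψ

/-!
Couple `p t` and `q t` for every next state `t`, mix these couplings over `t ~ κ s` and push the
mixture forward by `ψ ↦ φ s + γ • ψ` in both coordinates: this couples `Tdist γ φ κ p s` with
`Tdist γ φ κ q s`, and since the affine map scales distances by `γ`, the `W∞` distance contracts by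
`γ`. Invariance of the cube is the coordinatewise bound `0 ≤ φ s i + γ ψ i ≤ (1 - γ) + γ = 1`.
-/

namespace MeasureTheory.Measure

variable {α β γ : Type*} [MeasurableSpace α] [MeasurableSpace β] [MeasurableSpace γ]

theorem map_bind (m : Measure α) {f : α → Measure β} {g : β → γ} (hf : Measurable f)
    (hg : Measurable g) : (m.bind f).map g = m.bind fun a => (f a).map g := by
  ext s hs
  have hfg : Measurable fun a => (f a).map g := (measurable_map g hg).comp hf
  rw [map_apply hg hs, bind_apply (hg hs) hf.aemeasurable, bind_apply hs hfg.aemeasurable]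
  simp_rw [map_apply hg hs]

theorem ae_bind_of_forall_ae {m : Measure α} {f : α → Measure β} {P : β → Prop}
    (hf : Measurable f) (hP : MeasurableSet {b | P b}) (h : ∀ a, ∀ᵐ b ∂f a, P b) :
    ∀ᵐ b ∂m.bind f, P b := by
  simp only [ae_iff] at h ⊢
  rw [bind_apply (s := {b | ¬P b}) hP.compl hf.aemeasurable]
  simp [h]

end MeasureTheory.Measure

open Measure

theorem exists_coupling {E : Type*} [MeasurableSpace E] (μ ν : Measure E)
    [IsProbabilityMeasure μ] [IsProbabilityMeasure ν] :
    ∃ c : Measure (E × E), c.map Prod.fst = μ ∧ c.map Prod.snd = ν :=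
  ⟨μ.prod ν, by simp, by simp⟩

section Wasserstein

variable {E F : Type*} [PseudoEMetricSpace E] [MeasurableSpace E]
  [PseudoEMetricSpace F] [MeasurableSpace F] [SecondCountableTopology F] [BorelSpace F]

theorem Winf_le_essSup_of_coupling {μ ν : Measure E} {c : Measure (E × E)}
    (h₁ : c.map Prod.fst = μ) (h₂ : c.map Prod.snd = ν) :
    Winf μ ν ≤ essSup (fun pr : E × E => edist pr.1 pr.2) c :=
  iInf_le_of_le ⟨c, h₁, h₂⟩ le_rfl

theorem measurableSet_edist_le (r : ℝ≥0∞) :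
    MeasurableSet {pr : F × F | edist pr.1 pr.2 ≤ r} :=
  measurableSet_le continuous_edist.measurable measurable_const

theorem Winf_map_le_mul_essSup {μ ν : Measure E} {c : Measure (E × E)}
    (h₁ : c.map Prod.fst = μ) (h₂ : c.map Prod.snd = ν)
    {g : E → F} {K : NNReal} (hg : LipschitzWith K g) (hgm : Measurable g) :
    Winf (μ.map g) (ν.map g) ≤ K * essSup (fun pr : E × E => edist pr.1 pr.2) c := by
  have hG : Measurable (Prod.map g g) := hgm.prodMap hgm
  refine (Winf_le_essSup_of_coupling (c := c.map (Prod.map g g)) ?_ ?_).trans ?_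
  · rw [map_map measurable_fst hG, ← h₁, map_map hgm measurable_fst]; rfl
  · rw [map_map measurable_snd hG, ← h₂, map_map hgm measurable_snd]; rfl
  · refine essSup_le_of_ae_le _ ?_
    rw [Filter.EventuallyLE, ae_map_iff hG.aemeasurable (measurableSet_edist_le _)]
    filter_upwards [ae_le_essSup (fun pr : E × E => edist pr.1 pr.2)] with pr hpr
    exact (hg pr.1 pr.2).trans (mul_le_mul_right hpr _)

theorem Winf_map_le_mul (μ ν : Measure E) [IsProbabilityMeasure μ] [IsProbabilityMeasure ν]
    {g : E → F} {K : NNReal} (hg : LipschitzWith K g) (hgm : Measurable g) :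
    Winf (μ.map g) (ν.map g) ≤ K * Winf μ ν := by
  -- a coupling is needed for `K = 0`, as `Winf` of coupling-free pairs is `⊤` and `0 * ⊤ = 0`
  obtain ⟨c₀, hc₀⟩ := exists_coupling μ ν
  calc Winf (μ.map g) (ν.map g)
      ≤ ⨅ c : {c : Measure (E × E) // c.map Prod.fst = μ ∧ c.map Prod.snd = ν},
          K * essSup (fun pr : E × E => edist pr.1 pr.2) (c : Measure (E × E)) :=
        le_iInf fun c => Winf_map_le_mul_essSup c.2.1 c.2.2 hg hgm
    _ = K * Winf μ ν := (ENNReal.mul_iInf' (by simp) fun _ => ⟨⟨c₀, hc₀⟩⟩).symm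

theorem Winf_bind_le_iSup {S : Type*} [MeasurableSpace S] [DiscreteMeasurableSpace S]
    (κ : Measure S) (p q : S → Measure F) :
    Winf (κ.bind p) (κ.bind q) ≤ ⨆ t, Winf (p t) (q t) := by
  refine le_of_forall_gt_imp_ge_of_dense fun x hx => ?_
  have hc : ∀ t, ∃ c : {c : Measure (F × F) // c.map Prod.fst = p t ∧ c.map Prod.snd = q t},
      essSup (fun pr : F × F => edist pr.1 pr.2) (c : Measure (F × F)) < x :=
    fun t => iInf_lt_iff.mp ((le_iSup (fun t => Winf (p t) (q t)) t).trans_lt hx)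
  choose c hc using hc
  -- the mixture of the couplings `c t` over `t ~ κ` couples the two mixtures
  refine (Winf_le_essSup_of_coupling (c := κ.bind fun t => c t) ?_ ?_).trans ?_
  · rw [Measure.map_bind _ .of_discrete measurable_fst]; simp_rw [(c _).2.1]
  · rw [Measure.map_bind _ .of_discrete measurable_snd]; simp_rw [(c _).2.2]
  · refine essSup_le_of_ae_le _ (ae_bind_of_forall_ae .of_discrete (measurableSet_edist_le x) ?_)
    intro t
    filter_upwards [ae_le_essSup (fun pr : F × F => edist pr.1 pr.2)] with pr hpr
    exact hpr.trans (hc t).le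

end Wasserstein

theorem lipschitzWith_const_add_smul {𝕜 E : Type*} [NormedField 𝕜] [SeminormedAddCommGroup E]
    [NormedSpace 𝕜 E] (a : E) (c : 𝕜) : LipschitzWith ‖c‖₊ fun x : E => a + c • x :=
  LipschitzWith.of_dist_le_mul fun x y => by rw [dist_add_left, dist_smul₀, coe_nnnorm]

theorem measurableSet_unitCube (d : ℕ) : MeasurableSet (unitCube d) := by
  simp only [unitCube, Set.ofPred_forall]
  exact .iInter fun i => measurableSet_Icc.preimage (measurable_pi_apply i)

theorem mapsTo_unitCube {d : ℕ} {γ : ℝ} (hγ : 0 ≤ γ) {a : Fin d → ℝ}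
    (ha : ∀ i, a i ∈ Set.Icc (0 : ℝ) (1 - γ)) :
    Set.MapsTo (fun ψ => a + γ • ψ) (unitCube d) (unitCube d) := fun ψ hψ i => by
  obtain ⟨ha₀, ha₁⟩ := ha i
  obtain ⟨hψ₀, hψ₁⟩ := hψ i
  simp only [Pi.add_apply, Pi.smul_apply, smul_eq_mul]
  constructor <;> nlinarith

section Bellman

variable {S : Type*} [MeasurableSpace S] [DiscreteMeasurableSpace S] {d : ℕ}
  (γ : ℝ) (φ : S → Fin d → ℝ) (κ : S → Measure S) (p : S → Measure (Fin d → ℝ))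

theorem Tdist_eq_map_bind (s : S) :
    Tdist γ φ κ p s = ((κ s).bind p).map fun ψ => φ s + γ • ψ :=
  (Measure.map_bind _ .of_discrete (by fun_prop)).symm

theorem isProbabilityMeasure_Tdist [∀ s, IsProbabilityMeasure (κ s)]
    [∀ s, IsProbabilityMeasure (p s)] (s : S) : IsProbabilityMeasure (Tdist γ φ κ p s) :=
  isProbabilityMeasure_bind Measurable.of_discrete.aemeasurable
    (ae_of_all _ fun _ => isProbabilityMeasure_map (by fun_prop))

theorem Tdist_compl_unitCube {γ : ℝ} (hγ : 0 ≤ γ) {φ : S → Fin d → ℝ}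
    (hφ : ∀ s i, φ s i ∈ Set.Icc (0 : ℝ) (1 - γ)) {p : S → Measure (Fin d → ℝ)}
    (hp : ∀ s, p s (unitCube d)ᶜ = 0) (s : S) : Tdist γ φ κ p s (unitCube d)ᶜ = 0 := by
  rw [← mem_ae_iff]
  refine ae_bind_of_forall_ae .of_discrete (measurableSet_unitCube d) fun t => ?_
  rw [ae_map_iff (by fun_prop) (measurableSet_unitCube d)]
  have hpt : ∀ᵐ ψ ∂p t, ψ ∈ unitCube d := mem_ae_iff.2 (hp t)
  exact hpt.mono fun ψ hψ => mapsTo_unitCube hγ (hφ s) hψ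

theorem Winf_Tdist_le {γ : ℝ} (hγ : 0 ≤ γ) [∀ s, IsProbabilityMeasure (κ s)]
    (p q : S → Measure (Fin d → ℝ)) [∀ s, IsProbabilityMeasure (p s)]
    [∀ s, IsProbabilityMeasure (q s)] (s : S) :
    Winf (Tdist γ φ κ p s) (Tdist γ φ κ q s) ≤ ENNReal.ofReal γ * ⨆ t, Winf (p t) (q t) := by
  have : IsProbabilityMeasure ((κ s).bind p) :=
    isProbabilityMeasure_bind Measurable.of_discrete.aemeasurable (ae_of_all _ inferInstance)
  have : IsProbabilityMeasure ((κ s).bind q) :=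
    isProbabilityMeasure_bind Measurable.of_discrete.aemeasurable (ae_of_all _ inferInstance)
  rw [Tdist_eq_map_bind, Tdist_eq_map_bind, ← Real.enorm_eq_ofReal hγ]
  calc _ ≤ ‖γ‖₊ * Winf ((κ s).bind p) ((κ s).bind q) :=
        Winf_map_le_mul _ _ (lipschitzWith_const_add_smul (φ s) γ) (by fun_prop)
    _ ≤ ‖γ‖ₑ * ⨆ t, Winf (p t) (q t) := mul_le_mul_right (Winf_bind_le_iSup _ _ _) _

end Bellman

theorem distributional_bellman_contraction_general
    {S : Type*} [Fintype S] [MeasurableSpace S] [MeasurableSingletonClass S] {d : ℕ}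
    (γ : ℝ) (hγ0 : 0 ≤ γ)
    (φ : S → Fin d → ℝ) (hφ : ∀ s i, φ s i ∈ Set.Icc (0 : ℝ) (1 - γ))
    (κ : S → Measure S) (hκ : ∀ s, IsProbabilityMeasure (κ s))
    (p q : S → Measure (Fin d → ℝ))
    (hp : ∀ s, IsProbabilityMeasure (p s)) (hq : ∀ s, IsProbabilityMeasure (q s))
    (hpc : ∀ s, p s (unitCube d)ᶜ = 0) :
    (∀ s, IsProbabilityMeasure (Tdist γ φ κ p s) ∧ Tdist γ φ κ p s (unitCube d)ᶜ = 0) ∧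
    (⨆ s : S, Winf (Tdist γ φ κ p s) (Tdist γ φ κ q s))
      ≤ ENNReal.ofReal γ * ⨆ s : S, Winf (p s) (q s) :=
  ⟨fun s => ⟨isProbabilityMeasure_Tdist γ φ κ p s, Tdist_compl_unitCube κ hγ0 hφ hpc s⟩,
    iSup_le (Winf_Tdist_le φ κ hγ0 p q)⟩

/-- The distributional Bellman operator maps families of probability distributions
supported in `[0,1]^d` (with features in `[0,1-γ]^d`) into themselves, and is a
`γ`-contraction in the supremum-over-states `W∞` distance. -/
theorem distributional_bellman_contraction
    {S : Type*} [Fintype S] [MeasurableSpace S] [MeasurableSingletonClass S] {d : ℕ}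
    (γ : ℝ) (hγ0 : 0 ≤ γ) (hγ1 : γ < 1)
    (φ : S → Fin d → ℝ) (hφ : ∀ s i, φ s i ∈ Set.Icc (0 : ℝ) (1 - γ))
    (κ : S → Measure S) (hκ : ∀ s, IsProbabilityMeasure (κ s))
    (p q : S → Measure (Fin d → ℝ))
    (hp : ∀ s, IsProbabilityMeasure (p s)) (hq : ∀ s, IsProbabilityMeasure (q s))
    (hpc : ∀ s, p s (unitCube d)ᶜ = 0) (hqc : ∀ s, q s (unitCube d)ᶜ = 0) :
    (∀ s, IsProbabilityMeasure (Tdist γ φ κ p s) ∧ Tdist γ φ κ p s (unitCube d)ᶜ = 0) ∧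
    (⨆ s : S, Winf (Tdist γ φ κ p s) (Tdist γ φ κ q s))
      ≤ ENNReal.ofReal γ * ⨆ s : S, Winf (p s) (q s) :=
  distributional_bellman_contraction_general γ hγ0 φ hφ κ hκ p q hp hq hpc
end

section
/- In a deterministic MDP, if an outcome ψ is in the support of the true outcome distribution p₀(·|s) (i.e., achievable from s by some trajectory with dataset coverage of every transition), then there exists an action a and outcome ψ' in the support of p₀(·|T(s,a)) such that ψ = φ(s) + γψ'. -/
/-- States visited when following a (possibly non-stationary) action sequence `u`
from `s` under deterministic dynamics `T`. -/
def seqStates {S A : Type*} (T : S → A → S) (u : ℕ → A) (s : S) : ℕ → S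
  | 0 => s
  | t + 1 => T (seqStates T u s t) (u t)

theorem seqStates_succ {S A : Type*} (T : S → A → S) (u : ℕ → A) (s : S) (t : ℕ) :
    seqStates T u s (t + 1) = seqStates T (fun n => u (n + 1)) (T s (u 0)) t := by
  induction t with
  | zero => rfl
  | succ n ih => rw [seqStates, ih, seqStates]

theorem summable_pow_mul_of_abs_le {γ C : ℝ} (hγ0 : 0 ≤ γ) (hγ1 : γ < 1) {x : ℕ → ℝ}
    (hx : ∀ t, |x t| ≤ C) : Summable fun t => γ ^ t * x t :=
  ((summable_geometric_of_lt_one hγ0 hγ1).mul_right C).of_norm_bounded fun t => by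
    rw [norm_mul, norm_pow, Real.norm_of_nonneg hγ0, Real.norm_eq_abs]
    exact mul_le_mul_of_nonneg_left (hx t) (pow_nonneg hγ0 t)

theorem summable_pow_smul_of_abs_le {ι : Type*} {γ C : ℝ} (hγ0 : 0 ≤ γ) (hγ1 : γ < 1)
    {f : ℕ → ι → ℝ} (hf : ∀ t i, |f t i| ≤ C) : Summable fun t => γ ^ t • f t :=
  Pi.summable.2 fun i => summable_pow_mul_of_abs_le hγ0 hγ1 fun t => hf t i

theorem tsum_pow_smul_eq_add_smul_tsum {E : Type*} [AddCommGroup E] [Module ℝ E]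
    [TopologicalSpace E] [IsTopologicalAddGroup E] [ContinuousConstSMul ℝ E] [T2Space E]
    {γ : ℝ} {g : ℕ → E} (hg : Summable fun t => γ ^ t • g t) :
    ∑' t, γ ^ t • g t = g 0 + γ • ∑' t, γ ^ t • g (t + 1) := by
  rw [hg.tsum_eq_zero_add, pow_zero, one_smul, ← tsum_const_smul'']
  simp only [pow_succ', mul_smul]

/-- In a deterministic MDP, every achievable outcome `ψ` from `s` (a discounted
feature sum along some trajectory from `s`) decomposes as `ψ = φ(s) + γ ψ'` for some
action `a` and some outcome `ψ'` achievable from the successor state `T s a`. -/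
theorem achievable_outcome_decomposition
    {S A : Type*} {d : ℕ} (γ : ℝ) (hγ0 : 0 ≤ γ) (hγ1 : γ < 1)
    (T : S → A → S) (φ : S → Fin d → ℝ) (C : ℝ) (hφ : ∀ s i, |φ s i| ≤ C)
    (s : S) (ψ : Fin d → ℝ)
    (hach : ∃ u : ℕ → A, ψ = ∑' t : ℕ, γ ^ t • φ (seqStates T u s t)) :
    ∃ (a : A) (ψ' : Fin d → ℝ),
      (∃ u' : ℕ → A, ψ' = ∑' t : ℕ, γ ^ t • φ (seqStates T u' (T s a) t)) ∧
      ψ = φ s + γ • ψ' := by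
  obtain ⟨u, rfl⟩ := hach
  refine ⟨u 0, _, ⟨fun n => u (n + 1), rfl⟩, ?_⟩
  -- without summability `∑'` would be the junk value `0` and the first term could not be split off
  have hsum := summable_pow_smul_of_abs_le hγ0 hγ1 fun t => hφ (seqStates T u s t)
  simp only [tsum_pow_smul_eq_add_smul_tsum hsum, seqStates_succ]
  rfl
end
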